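/- Consider the Edge Model on a connected d-regular graph G with parameter α a constant in (0,1), with initial values centered so that Σ_{u∈V} ξ_u(0) = 0. All node values converge to a common random value F as t → ∞, and Var(F) = Θ( (Σ_{u∈V} ξ_u(0)²) / n² ). -/

import Mathlib

open MeasureTheory ProbabilityTheory Finset

/-- A step of the Edge Model: a directed edge, i.e. an ordered pair of adjacent nodes. -/
abbrev EdgeStep (n : ℕ) := Fin n × Fin n

/-- A connected graph on at least two vertices has a directed edge. -/
lemma exists_adj_pair {n : ℕ} (G : SimpleGraph (Fin n)) [DecidableRel G.Adj]
    (hconn : G.Connected) (hn : 1 < n) :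
    (Finset.univ.filter fun p : EdgeStep n => G.Adj p.1 p.2).Nonempty := by
  obtain ⟨w⟩ := hconn.preconnected ⟨0, by omega⟩ ⟨1, hn⟩
  cases w with
  | @cons _ v _ h _ => exact ⟨(_, v), by simpa using h⟩

/-- Distribution of a single step of the Edge Model: a uniformly random directed edge. -/
noncomputable def edgeStepPMF {n : ℕ} (G : SimpleGraph (Fin n)) [DecidableRel G.Adj]
    (hconn : G.Connected) (hn : 1 < n) : PMF (EdgeStep n) :=
  PMF.uniformOfFinset _ (exists_adj_pair G hconn hn)

/-- One update of the Edge Model: for the chosen directed edge `e = (u,v)`, node `u`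
replaces its value by `α ξ_u + (1-α) ξ_v`. -/
noncomputable def edgeUpdate {n : ℕ} (α : ℝ) (e : EdgeStep n) (ξ : Fin n → ℝ) : Fin n → ℝ :=
  fun w => if w = e.1 then α * ξ w + (1 - α) * ξ e.2 else ξ w

/-- The trajectory of node values of the Edge Model, given the sequence of step choices. -/
noncomputable def edgeTraj {n : ℕ} (α : ℝ) (ξ0 : Fin n → ℝ) (ω : ℕ → EdgeStep n) :
    ℕ → Fin n → ℝ
  | 0 => ξ0
  | t + 1 => edgeUpdate α (ω t) (edgeTraj α ξ0 ω t)

/-- Stationary distribution of the lazy random walk: `π u = d_u / (2m)`. -/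
noncomputable def piRW {n : ℕ} (G : SimpleGraph (Fin n)) [DecidableRel G.Adj] (u : Fin n) : ℝ :=
  (G.degree u : ℝ) / (2 * (G.edgeFinset.card : ℝ))

/-- The potential `φ(ξ) = (1/2) Σ_{u,v} π_u π_v (ξ_u - ξ_v)²`. -/
noncomputable def phi {n : ℕ} (G : SimpleGraph (Fin n)) [DecidableRel G.Adj]
    (ξ : Fin n → ℝ) : ℝ :=
  (1 / 2) * ∑ u, ∑ v, piRW G u * piRW G v * (ξ u - ξ v) ^ 2

/-- `lam` is the second-smallest eigenvalue of the graph Laplacian `L = D - A`: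
it is the smallest eigenvalue attained on the space of vectors orthogonal to `1`. -/
def IsSecondEigenvalueL {n : ℕ} (G : SimpleGraph (Fin n)) [DecidableRel G.Adj]
    (lam : ℝ) : Prop :=
  (∃ f : Fin n → ℝ, f ≠ 0 ∧ (G.lapMatrix ℝ).mulVec f = lam • f ∧ ∑ x, f x = 0) ∧
  ∀ lam' : ℝ,
    (∃ f : Fin n → ℝ, f ≠ 0 ∧ (G.lapMatrix ℝ).mulVec f = lam' • f ∧ ∑ x, f x = 0) →
      lam ≤ lam'

/-!
Both `Σ_u ξ_u` and `α (Σ_u ξ_u)² + (1 - α) Σ_u ξ_u²` are conserved in expectation by the Edge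
Model: the changes caused by the two orientations of an undirected edge cancel. In the limit
every `ξ_u` equals `F`, so `E F = 0` and `(α n² + (1 - α) n) E F² = (1 - α) Σ_u ξ_u(0)²`, which
computes `Var F` exactly.
-/

open Filter Topology

section EdgeModel

variable {n : ℕ}

def dirEdges (G : SimpleGraph (Fin n)) [DecidableRel G.Adj] : Finset (EdgeStep n) :=
  univ.filter fun p => G.Adj p.1 p.2

def edgeEnergy (α : ℝ) (ξ : Fin n → ℝ) : ℝ :=
  α * (∑ u, ξ u) ^ 2 + (1 - α) * ∑ u, ξ u ^ 2

lemma edgeEnergy_const (α x : ℝ) :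
    edgeEnergy α (fun _ : Fin n => x) = (α * n ^ 2 + (1 - α) * n) * x ^ 2 := by
  simp only [edgeEnergy, sum_const, card_univ, Fintype.card_fin, nsmul_eq_mul]
  ring

section Dynamics

variable {α : ℝ}

lemma norm_edgeUpdate_le (hα : α ∈ Set.Icc (0 : ℝ) 1) (e : EdgeStep n) (ξ : Fin n → ℝ) :
    ‖edgeUpdate α e ξ‖ ≤ ‖ξ‖ := by
  refine (pi_norm_le_iff_of_nonneg (norm_nonneg ξ)).2 fun w => ?_
  unfold edgeUpdate
  split_ifs
  · calc ‖α * ξ w + (1 - α) * ξ e.2‖ ≤ α * ‖ξ w‖ + (1 - α) * ‖ξ e.2‖ := by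
          refine (norm_add_le _ _).trans_eq ?_
          rw [norm_mul, norm_mul, Real.norm_of_nonneg hα.1, Real.norm_of_nonneg (sub_nonneg.2 hα.2)]
      _ ≤ α * ‖ξ‖ + (1 - α) * ‖ξ‖ := by
          have := sub_nonneg.2 hα.2
          gcongr <;> [exact hα.1; exact norm_le_pi_norm ξ w; exact norm_le_pi_norm ξ e.2]
      _ = ‖ξ‖ := by ring
  · exact norm_le_pi_norm ξ w

lemma norm_edgeTraj_le (hα : α ∈ Set.Icc (0 : ℝ) 1) (ξ0 : Fin n → ℝ) (ω : ℕ → EdgeStep n)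
    (t : ℕ) : ‖edgeTraj α ξ0 ω t‖ ≤ ‖ξ0‖ := by
  induction t with
  | zero => exact le_rfl
  | succ t ih => exact (norm_edgeUpdate_le hα _ _).trans ih

lemma edgeTraj_congr (ξ0 : Fin n → ℝ) {ω ω' : ℕ → EdgeStep n} {t : ℕ}
    (h : ∀ s < t, ω s = ω' s) : edgeTraj α ξ0 ω t = edgeTraj α ξ0 ω' t := by
  induction t with
  | zero => rfl
  | succ t ih =>
    simp only [edgeTraj]
    rw [ih fun s hs => h s (hs.trans t.lt_succ_self), h t t.lt_succ_self]

lemma continuous_edgeUpdate (e : EdgeStep n) : Continuous (edgeUpdate (n := n) α e) :=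
  continuous_pi fun w => by unfold edgeUpdate; split_ifs <;> fun_prop

lemma sum_comp_edgeUpdate (g : ℝ → ℝ) (e : EdgeStep n) (ξ : Fin n → ℝ) :
    ∑ w, g (edgeUpdate α e ξ w) =
      ∑ w, g (ξ w) + (g (α * ξ e.1 + (1 - α) * ξ e.2) - g (ξ e.1)) := by
  have h : ∀ w, g (edgeUpdate α e ξ w) =
      g (ξ w) + if w = e.1 then g (α * ξ e.1 + (1 - α) * ξ e.2) - g (ξ e.1) else 0 := by
    intro w
    unfold edgeUpdate
    split_ifs with hw
    · subst hw; ring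
    · ring
  simp only [h, sum_add_distrib, sum_ite_eq', mem_univ, if_true]

lemma sum_edgeUpdate (e : EdgeStep n) (ξ : Fin n → ℝ) :
    ∑ w, edgeUpdate α e ξ w = ∑ w, ξ w + (1 - α) * (ξ e.2 - ξ e.1) := by
  have h := sum_comp_edgeUpdate (α := α) id e ξ
  simp only [id] at h
  rw [h]; ring

lemma sum_sq_edgeUpdate (e : EdgeStep n) (ξ : Fin n → ℝ) :
    ∑ w, edgeUpdate α e ξ w ^ 2 =
      ∑ w, ξ w ^ 2 + ((α * ξ e.1 + (1 - α) * ξ e.2) ^ 2 - ξ e.1 ^ 2) :=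
  sum_comp_edgeUpdate (· ^ 2) e ξ

lemma sum_dirEdges_eq_zero {M : Type*} [AddCommGroup M] (G : SimpleGraph (Fin n))
    [DecidableRel G.Adj] {f : EdgeStep n → M} (hf : ∀ e, f e.swap = -f e) :
    ∑ e ∈ dirEdges G, f e = 0 := by
  refine sum_involution (fun e _ => e.swap) (fun e _ => by rw [hf, add_neg_cancel])
    (fun e he _ hswap => ?_) (fun e he => ?_) (fun e _ => e.swap_swap)
  · exact (mem_filter.1 he).2.ne (congrArg Prod.snd hswap)
  · simpa [dirEdges] using (mem_filter.1 he).2.symm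

lemma sum_dirEdges_sum_edgeUpdate_sub (G : SimpleGraph (Fin n)) [DecidableRel G.Adj]
    (ξ : Fin n → ℝ) : ∑ e ∈ dirEdges G, (∑ w, edgeUpdate α e ξ w - ∑ w, ξ w) = 0 :=
  sum_dirEdges_eq_zero G fun e => by
    simp only [sum_edgeUpdate, Prod.fst_swap, Prod.snd_swap]; ring

lemma sum_dirEdges_edgeEnergy_edgeUpdate_sub (G : SimpleGraph (Fin n)) [DecidableRel G.Adj]
    (ξ : Fin n → ℝ) :
    ∑ e ∈ dirEdges G, (edgeEnergy α (edgeUpdate α e ξ) - edgeEnergy α ξ) = 0 :=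
  sum_dirEdges_eq_zero G fun e => by
    simp only [edgeEnergy, sum_edgeUpdate, sum_sq_edgeUpdate, Prod.fst_swap, Prod.snd_swap]
    ring

lemma sum_edgeStepPMF_mul_eq {G : SimpleGraph (Fin n)} [DecidableRel G.Adj]
    (hconn : G.Connected) (hn : 1 < n) {h : (Fin n → ℝ) → ℝ}
    (hcons : ∀ ξ, ∑ e ∈ dirEdges G, (h (edgeUpdate α e ξ) - h ξ) = 0) (ξ : Fin n → ℝ) :
    ∑ e, (edgeStepPMF G hconn hn e).toReal * h (edgeUpdate α e ξ) = h ξ := by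
  have hcard : ((dirEdges G).card : ℝ) ≠ 0 := by
    exact_mod_cast (exists_adj_pair G hconn hn).card_pos.ne'
  have hsum := hcons ξ
  rw [sum_sub_distrib, sum_const, nsmul_eq_mul, sub_eq_zero] at hsum
  simp only [edgeStepPMF, PMF.uniformOfFinset_apply, apply_ite ENNReal.toReal, ite_mul,
    ENNReal.toReal_inv, ENNReal.toReal_natCast, ENNReal.toReal_zero, zero_mul]
  rw [sum_ite_mem, univ_inter, ← mul_sum]
  change ((dirEdges G).card : ℝ)⁻¹ * ∑ e ∈ dirEdges G, _ = _
  rw [hsum, inv_mul_cancel_left₀ hcard]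

end Dynamics

section Probability

variable {Ω : Type*} [MeasurableSpace Ω] {μ : Measure Ω}

lemma integral_comp_eq_sum_of_indepFun {E S : Type*} [Fintype E] [MeasurableSpace E]
    [MeasurableSingletonClass E] [DecidableEq E] [MeasurableSpace S] {X : Ω → E} {Y : Ω → S}
    (hX : Measurable X) (hXY : IndepFun X Y μ) {g : E → S → ℝ} (hg : ∀ e, Measurable (g e))
    (hint : ∀ e, Integrable (fun ω => g e (Y ω)) μ) :
    ∫ ω, g (X ω) (Y ω) ∂μ = ∑ e, μ.real (X ⁻¹' {e}) * ∫ ω, g e (Y ω) ∂μ := by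
  have hind : ∀ e, (fun ω => (if X ω = e then (1 : ℝ) else 0)) = (X ⁻¹' {e}).indicator 1 := by
    intro e; ext ω; by_cases h : X ω = e <;> simp [h]
  have hmX : ∀ e, MeasurableSet (X ⁻¹' {e}) := fun e => hX (measurableSet_singleton e)
  have hterm : ∀ e, ∫ ω, (if X ω = e then (1 : ℝ) else 0) * g e (Y ω) ∂μ =
      μ.real (X ⁻¹' {e}) * ∫ ω, g e (Y ω) ∂μ := by
    intro e
    have hφ : Measurable fun x : E => if x = e then (1 : ℝ) else 0 := measurable_of_countable _
    have hindep : IndepFun (fun ω => if X ω = e then (1 : ℝ) else 0) (fun ω => g e (Y ω)) μ :=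
      hXY.comp hφ (hg e)
    rw [hindep.integral_fun_mul_eq_mul_integral (hφ.comp hX).aestronglyMeasurable
      (hint e).aestronglyMeasurable, hind, integral_indicator_one (hmX e)]
  have hsplit : (fun ω => g (X ω) (Y ω)) =
      fun ω => ∑ e, (if X ω = e then (1 : ℝ) else 0) * g e (Y ω) := by
    ext ω; simp
  rw [hsplit, integral_finsetSum _ fun e _ => ?_]
  · exact sum_congr rfl fun e _ => hterm e
  · have : (fun ω => (if X ω = e then (1 : ℝ) else 0) * g e (Y ω)) =
        (X ⁻¹' {e}).indicator fun ω => g e (Y ω) := by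
      ext ω; by_cases h : X ω = e <;> simp [h]
    rw [this]
    exact (hint e).indicator (hmX e)

lemma integral_comp_eq_of_tendsto [IsFiniteMeasure μ] {E : Type*} [NormedAddCommGroup E]
    [ProperSpace E] {X : ℕ → Ω → E} {Y : Ω → E} {R : ℝ}
    (hX : ∀ t, AEStronglyMeasurable (X t) μ) (hR : ∀ t ω, ‖X t ω‖ ≤ R)
    (hY : ∀ᵐ ω ∂μ, Tendsto (fun t => X t ω) atTop (𝓝 (Y ω))) {h : E → ℝ} (hh : Continuous h)
    {c : ℝ} (hc : ∀ t, ∫ ω, h (X t ω) ∂μ = c) : ∫ ω, h (Y ω) ∂μ = c := by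
  obtain ⟨C, hC⟩ := (isCompact_closedBall (0 : E) R).exists_bound_of_continuousOn hh.continuousOn
  have hlim := tendsto_integral_of_dominated_convergence (fun _ => C)
    (fun t => hh.comp_aestronglyMeasurable (hX t)) (integrable_const C)
    (fun t => ae_of_all _ fun ω => hC _ (mem_closedBall_zero_iff.2 (hR t ω)))
    (hY.mono fun ω hω => (hh.tendsto _).comp hω)
  simp only [hc] at hlim
  exact tendsto_nhds_unique hlim tendsto_const_nhds

variable {α : ℝ} {steps : ℕ → Ω → EdgeStep n}

lemma measurable_edgeTraj (hmeas : ∀ t, Measurable (steps t)) (ξ0 : Fin n → ℝ) (t : ℕ) :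
    Measurable fun ω => edgeTraj α ξ0 (fun s => steps s ω) t := by
  induction t with
  | zero => exact measurable_const
  | succ t ih =>
    have hupd : Measurable fun p : (Fin n → ℝ) × EdgeStep n => edgeUpdate α p.2 p.1 :=
      measurable_from_prod_countable_left fun e => (continuous_edgeUpdate e).measurable
    exact hupd.comp (ih.prodMk (hmeas t))

lemma integrable_comp_edgeTraj [IsFiniteMeasure μ] (hα : α ∈ Set.Icc (0 : ℝ) 1)
    (hmeas : ∀ t, Measurable (steps t)) {h : (Fin n → ℝ) → ℝ} (hh : Continuous h)
    (ξ0 : Fin n → ℝ) (t : ℕ) :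
    Integrable (fun ω => h (edgeTraj α ξ0 (fun s => steps s ω) t)) μ := by
  obtain ⟨C, hC⟩ :=
    (isCompact_closedBall (0 : Fin n → ℝ) ‖ξ0‖).exists_bound_of_continuousOn hh.continuousOn
  exact .of_bound (hh.measurable.comp (measurable_edgeTraj hmeas ξ0 t)).aestronglyMeasurable C
    (ae_of_all _ fun ω => hC _ (mem_closedBall_zero_iff.2 (norm_edgeTraj_le hα _ _ t)))

lemma indepFun_step_edgeTraj [IsProbabilityMeasure μ] (hmeas : ∀ t, Measurable (steps t))
    (hind : iIndepFun steps μ) (ξ0 : Fin n → ℝ) (t : ℕ) :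
    IndepFun (steps t) (fun ω => edgeTraj α ξ0 (fun s => steps s ω) t) μ := by
  obtain ⟨ω₀⟩ := nonempty_of_isProbabilityMeasure μ
  -- the filler `steps t ω₀` sits at indices `≥ t`, which `edgeTraj … t` never reads
  let past : (range t → EdgeStep n) → Fin n → ℝ := fun es =>
    edgeTraj α ξ0 (fun s => if hs : s ∈ range t then es ⟨s, hs⟩ else steps t ω₀) t
  have hpast : (fun ω => edgeTraj α ξ0 (fun s => steps s ω) t) =
      past ∘ fun ω (s : range t) => steps s ω :=
    funext fun ω => edgeTraj_congr ξ0 fun s hs => by simp [mem_range.2 hs]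
  rw [hpast]
  exact (hind.indepFun_finset {t} (range t) (by simp) hmeas).comp
    (φ := fun es => es ⟨t, mem_singleton_self t⟩) (measurable_of_countable _)
    (measurable_of_countable past)

lemma integral_edgeTraj_of_harmonic [IsProbabilityMeasure μ] (hα : α ∈ Set.Icc (0 : ℝ) 1)
    (hmeas : ∀ t, Measurable (steps t)) (hind : iIndepFun steps μ) (p : PMF (EdgeStep n))
    (hlaw : ∀ t, μ.map (steps t) = p.toMeasure) {h : (Fin n → ℝ) → ℝ} (hh : Continuous h)
    (hharm : ∀ ξ, ∑ e, (p e).toReal * h (edgeUpdate α e ξ) = h ξ) (ξ0 : Fin n → ℝ) (t : ℕ) :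
    ∫ ω, h (edgeTraj α ξ0 (fun s => steps s ω) t) ∂μ = h ξ0 := by
  induction t with
  | zero => simp [edgeTraj]
  | succ t ih =>
    have hstep : ∀ e, μ.real (steps t ⁻¹' {e}) = (p e).toReal := fun e => by
      rw [measureReal_def, ← Measure.map_apply (hmeas t) (measurableSet_singleton e), hlaw,
        PMF.toMeasure_apply_singleton _ _ (measurableSet_singleton e)]
    have hupd : ∀ e, Continuous fun ξ => h (edgeUpdate α e ξ) :=
      fun e => hh.comp (continuous_edgeUpdate e)
    calc ∫ ω, h (edgeTraj α ξ0 (fun s => steps s ω) (t + 1)) ∂μ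
        = ∑ e, (p e).toReal *
            ∫ ω, h (edgeUpdate α e (edgeTraj α ξ0 (fun s => steps s ω) t)) ∂μ := by
          simp only [edgeTraj]
          rw [integral_comp_eq_sum_of_indepFun (g := fun e ξ => h (edgeUpdate α e ξ)) (hmeas t)
            (indepFun_step_edgeTraj hmeas hind ξ0 t) (fun e => (hupd e).measurable)
            (fun e => integrable_comp_edgeTraj hα hmeas (hupd e) ξ0 t)]
          simp only [hstep]
      _ = ∫ ω, h (edgeTraj α ξ0 (fun s => steps s ω) t) ∂μ := by
          simp only [← integral_const_mul]
          rw [← integral_finsetSum]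
          · simp only [hharm]
          · exact fun e _ => (integrable_comp_edgeTraj hα hmeas (hupd e) ξ0 t).const_mul _
      _ = h ξ0 := ih

lemma aemeasurable_of_tendsto_edgeTraj (hmeas : ∀ t, Measurable (steps t)) {ξ0 : Fin n → ℝ}
    {F : Ω → ℝ} {u : Fin n}
    (hconv : ∀ᵐ ω ∂μ, Tendsto (fun t => edgeTraj α ξ0 (fun s => steps s ω) t u) atTop (𝓝 (F ω))) :
    AEMeasurable F μ :=
  aemeasurable_of_tendsto_metrizable_ae'
    (fun t => (measurable_edgeTraj hmeas ξ0 t).eval.aemeasurable) hconv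

lemma integral_comp_limit_eq [IsProbabilityMeasure μ] (hα : α ∈ Set.Icc (0 : ℝ) 1)
    {G : SimpleGraph (Fin n)} [DecidableRel G.Adj] {hconn : G.Connected} {hn : 1 < n}
    (hmeas : ∀ t, Measurable (steps t)) (hind : iIndepFun steps μ)
    (hlaw : ∀ t, μ.map (steps t) = (edgeStepPMF G hconn hn).toMeasure) {ξ0 : Fin n → ℝ}
    {F : Ω → ℝ} (hconv : ∀ᵐ ω ∂μ, ∀ u,
      Tendsto (fun t => edgeTraj α ξ0 (fun s => steps s ω) t u) atTop (𝓝 (F ω)))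
    {h : (Fin n → ℝ) → ℝ} (hh : Continuous h)
    (hcons : ∀ ξ, ∑ e ∈ dirEdges G, (h (edgeUpdate α e ξ) - h ξ) = 0) :
    ∫ ω, h (fun _ => F ω) ∂μ = h ξ0 :=
  integral_comp_eq_of_tendsto (fun t => (measurable_edgeTraj hmeas ξ0 t).aestronglyMeasurable)
    (fun t _ => norm_edgeTraj_le hα ξ0 _ t) (hconv.mono fun _ hω => tendsto_pi_nhds.2 hω) hh
    (integral_edgeTraj_of_harmonic hα hmeas hind _ hlaw hh
      (sum_edgeStepPMF_mul_eq hconn hn hcons) ξ0)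

end Probability

end EdgeModel

/-- **Edge Model, concentration (Theorem 2(2)).**
For the Edge Model on a connected `d`-regular graph with a constant `α ∈ (0,1)`, and initial
values centered (`Σ_u ξ_u(0) = 0`), the common limit value `F` of the process satisfies
`Var(F) = Θ( (Σ_u ξ_u(0)²) / n² )`, with constants independent of the graph and of the
initial values. -/
theorem edge_model_variance_theta (α : ℝ) (hα : α ∈ Set.Ioo (0 : ℝ) 1) :
    ∃ c C : ℝ, 0 < c ∧ 0 < C ∧
      ∀ (n d : ℕ) (hn : 1 < n) (G : SimpleGraph (Fin n)) (_ : DecidableRel G.Adj)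
        (hconn : G.Connected) (_ : G.IsRegularOfDegree d)
        (ξ0 : Fin n → ℝ) (_ : ∑ u, ξ0 u = 0)
        (Ω : Type) (_ : MeasurableSpace Ω) (Pr : Measure Ω) (_ : IsProbabilityMeasure Pr)
        (steps : ℕ → Ω → EdgeStep n) (_ : ∀ t, Measurable (steps t))
        (_ : iIndepFun steps Pr)
        (_ : ∀ t, Measure.map (steps t) Pr = (edgeStepPMF G hconn hn).toMeasure)
        (F : Ω → ℝ)
        (_ : ∀ᵐ ω ∂Pr, ∀ u, Filter.Tendsto (fun t => edgeTraj α ξ0 (fun s => steps s ω) t u)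
              Filter.atTop (nhds (F ω))),
        c * (∑ u, (ξ0 u) ^ 2) / (n : ℝ) ^ 2 ≤ variance F Pr ∧
          variance F Pr ≤ C * (∑ u, (ξ0 u) ^ 2) / (n : ℝ) ^ 2 := by
  obtain ⟨hα0, hα1⟩ := hα
  refine ⟨1 - α, (1 - α) / α, by linarith, div_pos (by linarith) hα0, ?_⟩
  intro n d hn G _ hconn _ ξ0 hsum0 Ω _ Pr _ steps hmeas hind hlaw F hconv
  have hαI : α ∈ Set.Icc (0 : ℝ) 1 := ⟨hα0.le, hα1.le⟩
  have hmean : (n : ℝ) * ∫ ω, F ω ∂Pr = 0 := by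
    have h := integral_comp_limit_eq hαI hmeas hind hlaw hconv (h := fun ξ => ∑ u, ξ u)
      (by fun_prop) (sum_dirEdges_sum_edgeUpdate_sub G)
    simpa [integral_const_mul, hsum0] using h
  have hsecond : (α * n ^ 2 + (1 - α) * n) * ∫ ω, F ω ^ 2 ∂Pr = (1 - α) * ∑ u, ξ0 u ^ 2 := by
    have h := integral_comp_limit_eq hαI hmeas hind hlaw hconv (h := edgeEnergy α)
      (by unfold edgeEnergy; fun_prop) (sum_dirEdges_edgeEnergy_edgeUpdate_sub G)
    simp only [edgeEnergy_const, integral_const_mul] at h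
    rw [h, edgeEnergy, hsum0]
    ring
  have hN : (1 : ℝ) ≤ n := by exact_mod_cast hn.le
  have hvar : variance F Pr = ∫ ω, F ω ^ 2 ∂Pr := by
    rw [variance_eq_integral (aemeasurable_of_tendsto_edgeTraj hmeas
        (hconv.mono fun ω hω => hω ⟨0, by omega⟩)),
      (mul_eq_zero.1 hmean).resolve_left (by positivity)]
    simp
  have hV : 0 ≤ ∫ ω, F ω ^ 2 ∂Pr := integral_nonneg fun ω => sq_nonneg _
  have hS : 0 ≤ ∑ u, ξ0 u ^ 2 := sum_nonneg fun u _ => sq_nonneg _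
  rw [hvar, div_le_iff₀ (by positivity), le_div_iff₀ (by positivity), div_mul_eq_mul_div,
    le_div_iff₀ hα0]
  constructor
  · nlinarith [mul_nonneg (mul_nonneg hV (sub_nonneg.2 hα1.le)) (sub_nonneg.2 hN)]
  · nlinarith [mul_nonneg (mul_nonneg hV (sub_nonneg.2 hα1.le)) (by linarith : (0 : ℝ) ≤ n)]
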